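/- arXiv:2403.07471 — 5 statements merged into one kernel-verified Lean document; each statement's English description precedes it below -/
import Mathlib

section
/- Let P be a Borel probability measure on ℝ^d and Q a Borel probability measure on ℝ^p with finite second moment, and let F be a convex set of measurable functions each satisfying ∫ ‖f‖² dP = ∫ ‖y‖² dQ(y) < ∞. Then either F is empty, or any two elements of F are P-almost everywhere equal (i.e., F ⊆ {g | g = f P-a.e.} for some f). -/
open MeasureTheory

/-!
The squared `L²` norm is strictly convex: by the parallelogram law,
`‖f - g‖² = 2‖f‖² + 2‖g‖² - 4‖(f + g) / 2‖²` pointwise. If `f`, `g` and their midpoint all have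
the same squared `L²` norm, integrating this identity gives `∫ ‖f - g‖² = 0`, so `f = g` a.e.
-/

section

variable {E : Type*} [NormedAddCommGroup E] [InnerProductSpace ℝ E]

theorem norm_sub_sq_eq_sub_four_mul_norm_midpoint_sq (a b : E) :
    ‖a - b‖ ^ 2 = 2 * ‖a‖ ^ 2 + 2 * ‖b‖ ^ 2 - 4 * ‖midpoint ℝ a b‖ ^ 2 := by
  have apollonius :=
    EuclideanGeometry.dist_sq_add_dist_sq_eq_two_mul_dist_midpoint_sq_add_half_dist_sq (0 : E) a b
  simp only [dist_eq_norm, zero_sub, norm_neg, div_pow] at apollonius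
  linarith

theorem ae_eq_of_integral_norm_sq_le_integral_norm_midpoint_sq {α : Type*} [MeasurableSpace α]
    {μ : Measure α} {f g : α → E}
    (hf : Integrable (fun x => ‖f x‖ ^ 2) μ) (hg : Integrable (fun x => ‖g x‖ ^ 2) μ)
    (hm : Integrable (fun x => ‖midpoint ℝ (f x) (g x)‖ ^ 2) μ)
    (hle : (∫ x, ‖f x‖ ^ 2 ∂μ) + ∫ x, ‖g x‖ ^ 2 ∂μ ≤ 2 * ∫ x, ‖midpoint ℝ (f x) (g x)‖ ^ 2 ∂μ) :
    f =ᵐ[μ] g := by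
  have hsub : (fun x => ‖f x - g x‖ ^ 2) = fun x =>
      2 * ‖f x‖ ^ 2 + 2 * ‖g x‖ ^ 2 - 4 * ‖midpoint ℝ (f x) (g x)‖ ^ 2 :=
    funext fun x => norm_sub_sq_eq_sub_four_mul_norm_midpoint_sq (f x) (g x)
  have hfg : Integrable (fun x => 2 * ‖f x‖ ^ 2 + 2 * ‖g x‖ ^ 2) μ :=
    (hf.const_mul 2).add (hg.const_mul 2)
  have hint : Integrable (fun x => ‖f x - g x‖ ^ 2) μ := hsub ▸ hfg.sub (hm.const_mul 4)
  have hzero : ∫ x, ‖f x - g x‖ ^ 2 ∂μ = 0 := by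
    refine le_antisymm ?_ (integral_nonneg fun x => by positivity)
    rw [hsub, integral_sub hfg (hm.const_mul 4), integral_add (hf.const_mul 2) (hg.const_mul 2),
      integral_const_mul, integral_const_mul, integral_const_mul]
    linarith
  filter_upwards [(integral_eq_zero_iff_of_nonneg (fun x => by positivity) hint).1 hzero]
    with x hx
  simpa [sub_eq_zero] using hx

end

theorem nowhere_convexity_of_squared_norm_matching_general
    (d p : ℕ)
    (P : Measure (EuclideanSpace ℝ (Fin d)))
    (Q : Measure (EuclideanSpace ℝ (Fin p)))
    (F : Set (EuclideanSpace ℝ (Fin d) → EuclideanSpace ℝ (Fin p)))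
    (hFint : ∀ f ∈ F, Integrable (fun x => ‖f x‖ ^ 2) P)
    (hFnorm : ∀ f ∈ F, ∫ x, ‖f x‖ ^ 2 ∂P = ∫ y, ‖y‖ ^ 2 ∂Q)
    (hFconv : ∀ f ∈ F, ∀ g ∈ F, ∀ t : ℝ, t ∈ Set.Ioo (0:ℝ) 1 →
      (fun x => (1 - t) • f x + t • g x) ∈ F) :
    F = ∅ ∨ ∀ f ∈ F, ∀ g ∈ F, f =ᵐ[P] g := by
  refine Or.inr fun f hf g hg => ?_
  have hmid : (fun x => midpoint ℝ (f x) (g x)) ∈ F := by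
    simpa only [midpoint, AffineMap.lineMap_apply_module, invOf_eq_inv] using
      hFconv f hf g hg 2⁻¹ ⟨by norm_num, by norm_num⟩
  refine ae_eq_of_integral_norm_sq_le_integral_norm_midpoint_sq (hFint f hf) (hFint g hg)
    (hFint _ hmid) ?_
  rw [hFnorm f hf, hFnorm g hg, hFnorm _ hmid]
  linarith

theorem nowhere_convexity_of_squared_norm_matching
    (d p : ℕ)
    (P : Measure (EuclideanSpace ℝ (Fin d))) [IsProbabilityMeasure P]
    (Q : Measure (EuclideanSpace ℝ (Fin p))) [IsProbabilityMeasure Q]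
    (hQ : Integrable (fun y => ‖y‖ ^ 2) Q)
    (F : Set (EuclideanSpace ℝ (Fin d) → EuclideanSpace ℝ (Fin p)))
    (hFmeas : ∀ f ∈ F, Measurable f)
    (hFint : ∀ f ∈ F, Integrable (fun x => ‖f x‖ ^ 2) P)
    (hFnorm : ∀ f ∈ F, ∫ x, ‖f x‖ ^ 2 ∂P = ∫ y, ‖y‖ ^ 2 ∂Q)
    (hFconv : ∀ f ∈ F, ∀ g ∈ F, ∀ t : ℝ, t ∈ Set.Ioo (0:ℝ) 1 →
      (fun x => (1 - t) • f x + t • g x) ∈ F) :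
    F = ∅ ∨ ∀ f ∈ F, ∀ g ∈ F, f =ᵐ[P] g :=
  nowhere_convexity_of_squared_norm_matching_general d p P Q F hFint hFnorm hFconv
end

section
/- Let P be a Borel probability measure on ℝ^d and Q a Borel probability measure on ℝ^p with finite second moment. If the set of transport maps T(P,Q) := {f measurable | f♯P = Q} is convex, then either T(P,Q) is empty or any two elements of T(P,Q) are P-almost everywhere equal. -/
/-!
Push-forward preserves the second moment, so every transport map `f` has `∫ ‖f‖² dP = ∫ ‖y‖² dQ`.
For transport maps `f, g` and `t ∈ (0, 1)`, the convex combination `(1 - t) f + t g` is again one,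
and integrating the identity
`‖(1 - t) x + t y‖² = (1 - t) ‖x‖² + t ‖y‖² - t (1 - t) ‖x - y‖²`
gives `t (1 - t) ∫ ‖f - g‖² dP = 0`, hence `f = g` `P`-a.e.
-/

open MeasureTheory

theorem norm_one_sub_smul_add_smul_sq {F : Type*} [NormedAddCommGroup F] [InnerProductSpace ℝ F]
    (x y : F) (t : ℝ) :
    ‖(1 - t) • x + t • y‖ ^ 2 = (1 - t) * ‖x‖ ^ 2 + t * ‖y‖ ^ 2 - t * (1 - t) * ‖x - y‖ ^ 2 := by
  rw [norm_add_sq_real, norm_sub_sq_real, norm_smul, norm_smul, real_inner_smul_left,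
    real_inner_smul_right, mul_pow, mul_pow, Real.norm_eq_abs, Real.norm_eq_abs, sq_abs, sq_abs]
  ring

section SecondMoment

variable {α β : Type*} [MeasurableSpace α] [MeasurableSpace β] [NormedAddCommGroup β]
  [OpensMeasurableSpace β] {μ : Measure α} {ν : Measure β} {f : α → β}

theorem integrable_norm_sq_comp_of_map_eq (hf : AEMeasurable f μ) (hfν : μ.map f = ν)
    (hν : Integrable (fun y => ‖y‖ ^ 2) ν) : Integrable (fun x => ‖f x‖ ^ 2) μ := by
  subst hfν
  exact (integrable_map_measure (measurable_norm.pow_const 2).aestronglyMeasurable hf).mp hν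

theorem integral_norm_sq_comp_of_map_eq (hf : AEMeasurable f μ) (hfν : μ.map f = ν) :
    ∫ x, ‖f x‖ ^ 2 ∂μ = ∫ y, ‖y‖ ^ 2 ∂ν := by
  subst hfν
  exact (integral_map hf (measurable_norm.pow_const 2).aestronglyMeasurable).symm

end SecondMoment

theorem ae_eq_of_integral_norm_sq_one_sub_smul_add_smul_eq {α F : Type*} [MeasurableSpace α]
    [NormedAddCommGroup F] [InnerProductSpace ℝ F] {μ : Measure α} {f g : α → F} {t c : ℝ}
    (ht : t ∈ Set.Ioo (0 : ℝ) 1)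
    (hf : Integrable (fun x => ‖f x‖ ^ 2) μ) (hg : Integrable (fun x => ‖g x‖ ^ 2) μ)
    (hfg : Integrable (fun x => ‖(1 - t) • f x + t • g x‖ ^ 2) μ)
    (hfc : ∫ x, ‖f x‖ ^ 2 ∂μ = c) (hgc : ∫ x, ‖g x‖ ^ 2 ∂μ = c)
    (hfgc : ∫ x, ‖(1 - t) • f x + t • g x‖ ^ 2 ∂μ = c) :
    f =ᵐ[μ] g := by
  obtain ⟨ht₀, ht₁⟩ := ht
  have hpos : 0 < t * (1 - t) := mul_pos ht₀ (sub_pos.mpr ht₁)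
  have hdist : (fun x => ‖f x - g x‖ ^ 2) = fun x => (t * (1 - t))⁻¹ *
      ((1 - t) * ‖f x‖ ^ 2 + t * ‖g x‖ ^ 2 - ‖(1 - t) • f x + t • g x‖ ^ 2) := by
    ext x
    rw [norm_one_sub_smul_add_smul_sq]
    field_simp
    ring
  have hint : Integrable (fun x => (1 - t) * ‖f x‖ ^ 2 + t * ‖g x‖ ^ 2) μ :=
    (hf.const_mul _).add (hg.const_mul _)
  have hzero : ∫ x, ‖f x - g x‖ ^ 2 ∂μ = 0 := by
    rw [hdist, integral_const_mul, integral_sub hint hfg, integral_add (hf.const_mul _) (hg.const_mul _),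
      integral_const_mul, integral_const_mul, hfc, hgc, hfgc]
    ring
  have hdist_int : Integrable (fun x => ‖f x - g x‖ ^ 2) μ := by
    rw [hdist]
    exact (hint.sub hfg).const_mul _
  filter_upwards [(integral_eq_zero_iff_of_nonneg (fun x => by positivity) hdist_int).mp hzero]
    with x hx
  simpa [sub_eq_zero] using hx

theorem transport_maps_convex_implies_trivial_general
    (d p : ℕ)
    (P : Measure (EuclideanSpace ℝ (Fin d)))
    (Q : Measure (EuclideanSpace ℝ (Fin p)))
    (hQ : Integrable (fun y => ‖y‖ ^ 2) Q)
    (T : Set (EuclideanSpace ℝ (Fin d) → EuclideanSpace ℝ (Fin p)))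
    (hT : T = {f | Measurable f ∧ P.map f = Q})
    (hTconv : ∀ f ∈ T, ∀ g ∈ T, ∀ t : ℝ, t ∈ Set.Ioo (0:ℝ) 1 →
      (fun x => (1 - t) • f x + t • g x) ∈ T) :
    T = ∅ ∨ ∀ f ∈ T, ∀ g ∈ T, f =ᵐ[P] g := by
  right
  intro f hf g hg
  have ht : (1 / 2 : ℝ) ∈ Set.Ioo (0 : ℝ) 1 := ⟨by norm_num, by norm_num⟩
  have hmid := hTconv f hf g hg _ ht
  subst hT
  obtain ⟨hfm, hfQ⟩ := hf
  obtain ⟨hgm, hgQ⟩ := hg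
  obtain ⟨hmm, hmQ⟩ := hmid
  exact ae_eq_of_integral_norm_sq_one_sub_smul_add_smul_eq ht
    (integrable_norm_sq_comp_of_map_eq hfm.aemeasurable hfQ hQ)
    (integrable_norm_sq_comp_of_map_eq hgm.aemeasurable hgQ hQ)
    (integrable_norm_sq_comp_of_map_eq hmm.aemeasurable hmQ hQ)
    (integral_norm_sq_comp_of_map_eq hfm.aemeasurable hfQ)
    (integral_norm_sq_comp_of_map_eq hgm.aemeasurable hgQ)
    (integral_norm_sq_comp_of_map_eq hmm.aemeasurable hmQ)

theorem transport_maps_convex_implies_trivial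
    (d p : ℕ)
    (P : Measure (EuclideanSpace ℝ (Fin d))) [IsProbabilityMeasure P]
    (Q : Measure (EuclideanSpace ℝ (Fin p))) [IsProbabilityMeasure Q]
    (hQ : Integrable (fun y => ‖y‖ ^ 2) Q)
    (T : Set (EuclideanSpace ℝ (Fin d) → EuclideanSpace ℝ (Fin p)))
    (hT : T = {f | Measurable f ∧ P.map f = Q})
    (hTconv : ∀ f ∈ T, ∀ g ∈ T, ∀ t : ℝ, t ∈ Set.Ioo (0:ℝ) 1 →
      (fun x => (1 - t) • f x + t • g x) ∈ T) :
    T = ∅ ∨ ∀ f ∈ T, ∀ g ∈ T, f =ᵐ[P] g :=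
  transport_maps_convex_implies_trivial_general d p P Q hQ T hT hTconv
end

section
/- Let P, Q be Borel probability measures on ℝ^d that are absolutely continuous with respect to Lebesgue measure and P ≠ Q. Then E(P,Q) := {f : ℝ^d → ℝ^p measurable | f♯P = f♯Q} is not convex. -/
/-!
Write `D = P - Q`. Projecting onto a coordinate turns `P` and `Q` into atomless measures on `ℝ`,
so the distribution functions are continuous and the intermediate value theorem splits any set
`A` into a part carrying exactly half of `D A`. Pick `A` with `D A = δ ≠ 0`, a half `A₁ ⊆ A` and
a half `B₁ ⊆ Aᶜ` (carrying `-δ/2`). Then `S = A₁ ∪ B₁` and `T = A₁ ∪ (Aᶜ \ B₁)` are `D`-null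
while `D (S ∩ T) = δ/2`. The maps `x ↦ e · 1[x ∉ S]` and `x ↦ e · 1[x ∉ T]` equalize `P` and `Q`,
but their midpoint vanishes exactly on `S ∩ T`, so it does not.
-/

open MeasureTheory Set Filter Topology

theorem eq_of_isProbabilityMeasure_of_subsingleton {α : Type*} [MeasurableSpace α] [Subsingleton α]
    (μ ν : Measure α) [IsProbabilityMeasure μ] [IsProbabilityMeasure ν] : μ = ν := by
  ext s _
  rcases s.eq_empty_or_nonempty with rfl | ⟨x, hx⟩
  · simp
  · rw [show s = univ from eq_univ_of_forall fun y => Subsingleton.elim x y ▸ hx, measure_univ,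
      measure_univ]

theorem addHaar_preimage_singleton_eq_zero {E : Type*} [NormedAddCommGroup E] [NormedSpace ℝ E]
    [MeasurableSpace E] [BorelSpace E] [FiniteDimensional ℝ E] (μ : Measure E)
    [μ.IsAddHaarMeasure] {L : E →ₗ[ℝ] ℝ} (hL : L ≠ 0) (r : ℝ) : μ (L ⁻¹' {r}) = 0 := by
  obtain ⟨x, rfl⟩ := LinearMap.surjective_of_ne_zero hL r
  have hfiber : L ⁻¹' {L x} = (· + -x) ⁻¹' (LinearMap.ker L) := by
    ext y; simp [sub_eq_zero, ← sub_eq_add_neg]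
  rw [hfiber, measure_preimage_add_right]
  exact Measure.addHaar_submodule μ _ (mt LinearMap.ker_eq_top.1 hL)

theorem continuous_measureReal_Iic (μ : Measure ℝ) [IsFiniteMeasure μ] [NullSingletonClass μ] :
    Continuous fun r => μ.real (Iic r) := by
  -- dominated convergence: off the null set `{a}`, `r ↦ 1[x ≤ r]` is locally constant near `a`
  simp_rw [← integral_indicator_one measurableSet_Iic]
  rw [continuous_iff_continuousAt]
  intro a
  refine continuousAt_of_dominated (bound := fun _ => 1)
    (Eventually.of_forall fun r =>
      (measurable_const.indicator measurableSet_Iic).aestronglyMeasurable)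
    (Eventually.of_forall fun r => Eventually.of_forall fun x => ?_) (integrable_const 1) ?_
  · simp only [indicator, Pi.one_apply]; split_ifs <;> simp
  · filter_upwards [measure_eq_zero_iff_ae_notMem.1 (measure_singleton (μ := μ) a)] with x hx
    rcases lt_or_gt_of_ne (show x ≠ a from hx) with h | h
    · refine (continuousAt_const (y := (1 : ℝ))).congr ?_
      filter_upwards [eventually_gt_nhds h] with r hr
      simp [indicator, hr.le]
    · refine (continuousAt_const (y := (0 : ℝ))).congr ?_
      filter_upwards [eventually_lt_nhds h] with r hr
      simp [indicator, hr.not_ge]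

theorem tendsto_measureReal_Iic_atTop (μ : Measure ℝ) [IsFiniteMeasure μ] :
    Tendsto (fun r => μ.real (Iic r)) atTop (𝓝 (μ.real univ)) :=
  (ENNReal.tendsto_toReal (measure_ne_top μ univ)).comp (tendsto_measure_Iic_atTop μ)

theorem tendsto_measureReal_Iic_atBot (μ : Measure ℝ) [IsFiniteMeasure μ] :
    Tendsto (fun r => μ.real (Iic r)) atBot (𝓝 0) := by
  have h := tendsto_measure_iInter_atBot (μ := μ) (fun r => measurableSet_Iic.nullMeasurableSet)
    monotone_Iic ⟨0, measure_ne_top μ _⟩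
  rw [iInter_Iic_eq_empty_iff.2 (by simp), measure_empty] at h
  exact (ENNReal.tendsto_toReal ENNReal.zero_ne_top).comp h

theorem exists_measureReal_Iic_sub_eq_half (μ ν : Measure ℝ) [IsFiniteMeasure μ]
    [IsFiniteMeasure ν] [NullSingletonClass μ] [NullSingletonClass ν]
    (hne : μ.real univ ≠ ν.real univ) :
    ∃ r, μ.real (Iic r) - ν.real (Iic r) = (μ.real univ - ν.real univ) / 2 := by
  set G : ℝ → ℝ := fun r => μ.real (Iic r) - ν.real (Iic r)
  have hG : Continuous G := (continuous_measureReal_Iic μ).sub (continuous_measureReal_Iic ν)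
  have hbot : Tendsto G atBot (𝓝 0) := by
    simpa using (tendsto_measureReal_Iic_atBot μ).sub (tendsto_measureReal_Iic_atBot ν)
  have htop : Tendsto G atTop (𝓝 (μ.real univ - ν.real univ)) :=
    (tendsto_measureReal_Iic_atTop μ).sub (tendsto_measureReal_Iic_atTop ν)
  rcases hne.lt_or_gt with h | h
  · exact mem_range_of_exists_le_of_exists_ge hG
      (htop.eventually_le_const (by linarith)).exists (hbot.eventually_const_le (by linarith)).exists
  · exact mem_range_of_exists_le_of_exists_ge hG
      (hbot.eventually_le_const (by linarith)).exists (htop.eventually_const_le (by linarith)).exists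

theorem exists_subset_measureReal_sub_eq_half {α : Type*} [MeasurableSpace α] {μ ν : Measure α}
    [IsFiniteMeasure μ] [IsFiniteMeasure ν] {π : α → ℝ} (hπ : Measurable π)
    (hμ : ∀ r, μ (π ⁻¹' {r}) = 0) (hν : ∀ r, ν (π ⁻¹' {r}) = 0) {A : Set α}
    (hA : MeasurableSet A) (hne : μ.real A ≠ ν.real A) :
    ∃ B ⊆ A, MeasurableSet B ∧ μ.real B - ν.real B = (μ.real A - ν.real A) / 2 := by
  have hreal (m : Measure α) {s : Set ℝ} (hs : MeasurableSet s) :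
      ((m.restrict A).map π).real s = m.real (π ⁻¹' s ∩ A) := by
    rw [map_measureReal_apply hπ hs, measureReal_restrict_apply (hπ hs)]
  have hatomless (m : Measure α) (hm : ∀ r, m (π ⁻¹' {r}) = 0) :
      NullSingletonClass ((m.restrict A).map π) := ⟨fun r => by
    rw [Measure.map_apply hπ (measurableSet_singleton r),
      Measure.restrict_apply (hπ (measurableSet_singleton r))]
    exact measure_mono_null inter_subset_left (hm r)⟩
  have := hatomless μ hμ
  have := hatomless ν hν
  obtain ⟨r, hr⟩ := exists_measureReal_Iic_sub_eq_half ((μ.restrict A).map π)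
    ((ν.restrict A).map π) (by simpa [hreal _ MeasurableSet.univ] using hne)
  exact ⟨π ⁻¹' Iic r ∩ A, inter_subset_right, (hπ measurableSet_Iic).inter hA,
    by simpa [hreal _ measurableSet_Iic, hreal _ MeasurableSet.univ] using hr⟩

theorem exists_measure_eq_measure_eq_measure_inter_ne {α : Type*} [MeasurableSpace α]
    {μ ν : Measure α} [IsProbabilityMeasure μ] [IsProbabilityMeasure ν] (hμν : μ ≠ ν)
    (hbisect : ∀ A, MeasurableSet A → μ.real A ≠ ν.real A →
      ∃ B ⊆ A, MeasurableSet B ∧ μ.real B - ν.real B = (μ.real A - ν.real A) / 2) :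
    ∃ S T, MeasurableSet S ∧ MeasurableSet T ∧ μ S = ν S ∧ μ T = ν T ∧
      μ (S ∩ T) ≠ ν (S ∩ T) := by
  obtain ⟨A, hA, hne⟩ : ∃ A, MeasurableSet A ∧ μ.real A ≠ ν.real A := by
    by_contra! h
    exact hμν (Measure.ext fun s hs => (measureReal_eq_measureReal_iff).1 (h s hs))
  have hcompl (m : Measure α) [IsProbabilityMeasure m] : m.real Aᶜ = 1 - m.real A :=
    probReal_compl_eq_one_sub hA
  obtain ⟨A₁, hA₁A, hA₁, hhalf⟩ := hbisect A hA hne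
  obtain ⟨B₁, hB₁A, hB₁, hhalf'⟩ := hbisect Aᶜ hA.compl (by
    rw [hcompl μ, hcompl ν]; intro h; apply hne; linarith)
  rw [hcompl μ, hcompl ν] at hhalf'
  have hdisj : Disjoint A₁ Aᶜ := disjoint_compl_right.mono_left hA₁A
  have hST : (A₁ ∪ B₁) ∩ (A₁ ∪ (Aᶜ \ B₁)) = A₁ := by
    rw [← union_inter_distrib_left, inter_sdiff_self, union_empty]
  refine ⟨A₁ ∪ B₁, A₁ ∪ (Aᶜ \ B₁), hA₁.union hB₁, hA₁.union (hA.compl.diff hB₁), ?_, ?_, ?_⟩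
  · rw [← measureReal_eq_measureReal_iff, measureReal_union (hdisj.mono_right hB₁A) hB₁,
      measureReal_union (hdisj.mono_right hB₁A) hB₁]
    linarith
  · rw [← measureReal_eq_measureReal_iff,
      measureReal_union (hdisj.mono_right sdiff_subset) (hA.compl.diff hB₁),
      measureReal_union (hdisj.mono_right sdiff_subset) (hA.compl.diff hB₁),
      measureReal_sdiff hB₁A hB₁, measureReal_sdiff hB₁A hB₁, hcompl μ, hcompl ν]
    linarith
  · rw [hST, Ne, ← measureReal_eq_measureReal_iff]
    intro h
    apply hne
    linarith

theorem map_indicator_const_eq_of_measure_eq {α V : Type*} [MeasurableSpace α] [MeasurableSpace V]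
    [Zero V] {μ ν : Measure α} [IsProbabilityMeasure μ] [IsProbabilityMeasure ν] {U : Set α}
    (hU : MeasurableSet U) (h : μ U = ν U) (a : V) :
    μ.map (U.indicator fun _ => a) = ν.map (U.indicator fun _ => a) := by
  have hm : Measurable (U.indicator fun _ : α => a) := measurable_const.indicator hU
  ext s hs
  rw [Measure.map_apply hm hs, Measure.map_apply hm hs]
  obtain h' | h' | h' | h' := indicator_const_preimage U s a <;> rw [h']
  · simp
  · exact h
  · rw [prob_compl_eq_one_sub hU, prob_compl_eq_one_sub hU, h]
  · simp

theorem smul_indicator_compl_add_smul_indicator_compl_eq_zero_iff {α V : Type*} [AddCommGroup V]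
    [Module ℝ V] {S T : Set α} {e : V} (he : e ≠ 0) {t : ℝ} (ht : t ∈ Ioo (0 : ℝ) 1) (x : α) :
    (1 - t) • Sᶜ.indicator (fun _ => e) x + t • Tᶜ.indicator (fun _ => e) x = 0 ↔ x ∈ S ∩ T := by
  have h₁ : 1 - t ≠ 0 := by linarith [ht.2]
  by_cases hS : x ∈ S <;> by_cases hT : x ∈ T <;>
    simp [hS, hT, he, h₁, ht.1.ne', ← add_smul]

theorem equalizing_maps_abs_continuous_not_convex
    (d p : ℕ) (hp : 1 ≤ p)
    (P Q : Measure (EuclideanSpace ℝ (Fin d)))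
    [IsProbabilityMeasure P] [IsProbabilityMeasure Q]
    (hPac : P ≪ (volume : Measure (EuclideanSpace ℝ (Fin d))))
    (hQac : Q ≪ (volume : Measure (EuclideanSpace ℝ (Fin d))))
    (hPQ : P ≠ Q)
    (E : Set (EuclideanSpace ℝ (Fin d) → EuclideanSpace ℝ (Fin p)))
    (hE : E = {f | Measurable f ∧ P.map f = Q.map f}) :
    ¬ (∀ f ∈ E, ∀ g ∈ E, ∀ t : ℝ, t ∈ Set.Ioo (0:ℝ) 1 →
        (fun x => (1 - t) • f x + t • g x) ∈ E) := by
  subst hE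
  intro hconv
  have hd : 0 < d := Nat.pos_of_ne_zero fun hd =>
    hPQ (by subst hd; exact eq_of_isProbabilityMeasure_of_subsingleton P Q)
  set π := EuclideanSpace.proj (𝕜 := ℝ) (⟨0, hd⟩ : Fin d)
  have hπ : (π : EuclideanSpace ℝ (Fin d) →ₗ[ℝ] ℝ) ≠ 0 := fun h => by
    simpa [π] using LinearMap.congr_fun h (EuclideanSpace.single ⟨0, hd⟩ 1)
  have hfiber (m : Measure _) (hm : m ≪ volume) (r : ℝ) : m (π ⁻¹' {r}) = 0 :=
    hm (addHaar_preimage_singleton_eq_zero volume hπ r)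
  obtain ⟨S, T, hS, hT, hPS, hPT, hPST⟩ := exists_measure_eq_measure_eq_measure_inter_ne hPQ
    fun A hA hne => exists_subset_measureReal_sub_eq_half π.measurable (hfiber P hPac)
      (hfiber Q hQac) hA hne
  set e := EuclideanSpace.single (⟨0, hp⟩ : Fin p) (1 : ℝ)
  have he : e ≠ 0 := by simp [e]
  have hequalizing {U} (hU : MeasurableSet U) (h : P U = Q U) :
      Uᶜ.indicator (fun _ => e) ∈ {f | Measurable f ∧ P.map f = Q.map f} :=
    ⟨measurable_const.indicator hU.compl, map_indicator_const_eq_of_measure_eq hU.compl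
      (by rw [prob_compl_eq_one_sub hU, prob_compl_eq_one_sub hU, h]) e⟩
  have ht : (1 / 2 : ℝ) ∈ Ioo (0 : ℝ) 1 := by norm_num
  obtain ⟨hmeas, hmap⟩ := hconv _ (hequalizing hS hPS) _ (hequalizing hT hPT) _ ht
  have hzero : (fun x => (1 - 1 / 2 : ℝ) • Sᶜ.indicator (fun _ => e) x +
      (1 / 2 : ℝ) • Tᶜ.indicator (fun _ => e) x) ⁻¹' {0} = S ∩ T :=
    ext fun x => smul_indicator_compl_add_smul_indicator_compl_eq_zero_iff he ht x
  apply hPST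
  rw [← hzero, ← Measure.map_apply hmeas (measurableSet_singleton 0), hmap,
    Measure.map_apply hmeas (measurableSet_singleton 0)]
end

section
/- Let n, m ≥ 1 be integers that are not coprime, let {x_i}_{i=1}^n and {y_j}_{j=1}^m be pairwise distinct points in ℝ^d with disjoint supports, and set P = (1/n)Σδ_{x_i}, Q = (1/m)Σδ_{y_j}. Then E(P,Q) := {f measurable | f♯P = f♯Q} is not convex. -/
/-!
Let `q` be a prime dividing both `n` and `m`. Any map sending a set of `n / q` of the `x i` and
a set of `m / q` of the `y j` to `b ≠ 0`, and everything else to `0`, pushes both `P` and `Q` to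
`q⁻¹ • (δ_b + (q - 1) • δ_0)`, so it is equalizing. Two such maps that differ at one point `y j₀`
have a midpoint taking the value `b / 2` at `y j₀` but at no `x i`, so the midpoint does not
equalize `P` and `Q`.
-/

open MeasureTheory Set Function Finset
open scoped ENNReal

noncomputable def empiricalMeasure {α ι : Type*} [MeasurableSpace α] [Fintype ι] (z : ι → α) :
    Measure α :=
  (Fintype.card ι : ℝ≥0∞)⁻¹ • ∑ i, Measure.dirac (z i)

section Empirical

variable {α β ι : Type*} [MeasurableSpace α] [MeasurableSpace β] [Fintype ι]

theorem empiricalMeasure_fin {k : ℕ} (z : Fin k → α) :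
    empiricalMeasure z = (k : ℝ≥0∞)⁻¹ • ∑ i, Measure.dirac (z i) := by
  rw [empiricalMeasure, Fintype.card_fin]

theorem map_empiricalMeasure {f : α → β} (hf : Measurable f) (z : ι → α) :
    (empiricalMeasure z).map f = empiricalMeasure (f ∘ z) := by
  simp only [empiricalMeasure, Measure.map_smul, Measure.map_finset_sum' hf.aemeasurable,
    Measure.map_dirac' hf, comp_apply]

theorem empiricalMeasure_apply_eq_zero_iff [MeasurableSingletonClass α] (z : ι → α) (s : Set α) :
    empiricalMeasure z s = 0 ↔ z ⁻¹' s = ∅ := by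
  simp [empiricalMeasure, Measure.dirac_apply, Set.eq_empty_iff_forall_notMem]

theorem empiricalMeasure_indicator [Zero β] {r : ℕ} {s : Finset ι} (hs : s.Nonempty)
    (hcard : Fintype.card ι = r * #s) (b : β) :
    empiricalMeasure ((s : Set ι).indicator fun _ => b)
      = (r : ℝ≥0∞)⁻¹ • (Measure.dirac b + (r - 1) • Measure.dirac 0) := by
  classical
  have hsum : ∑ i, Measure.dirac ((s : Set ι).indicator (fun _ => b) i)
      = #s • (Measure.dirac b + (r - 1) • Measure.dirac (0 : β)) := by
    have hcompl : #sᶜ = (r - 1) * #s := by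
      rw [card_compl, hcard, Nat.sub_one_mul]
    rw [← Finset.sum_add_sum_compl s,
      sum_eq_card_nsmul fun i hi => by rw [Set.indicator_of_mem (mem_coe.2 hi)],
      sum_eq_card_nsmul fun i hi => by
        rw [Set.indicator_of_notMem (mt mem_coe.1 (mem_compl.1 hi))],
      hcompl, smul_add, mul_nsmul]
  have hcoef : ((r * #s : ℕ) : ℝ≥0∞)⁻¹ * #s = (r : ℝ≥0∞)⁻¹ := by
    have : (#s : ℝ≥0∞) ≠ 0 := by exact_mod_cast hs.card_pos.ne'
    rw [Nat.cast_mul,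
      ENNReal.mul_inv (.inr (ENNReal.natCast_ne_top _)) (.inl (ENNReal.natCast_ne_top _)),
      mul_assoc, ENNReal.inv_mul_cancel this (ENNReal.natCast_ne_top _), mul_one]
  rw [empiricalMeasure, hsum, hcard, ← Nat.cast_smul_eq_nsmul ℝ≥0∞, smul_smul, hcoef]

end Empirical

theorem Set.preimage_image_union_image_of_injective {α ι κ : Type*} {x : ι → α} {y : κ → α}
    (hx : Injective x) (hxy : Disjoint (range x) (range y)) (I : Set ι) (J : Set κ) :
    x ⁻¹' (x '' I ∪ y '' J) = I := by
  rw [preimage_union, hx.preimage_image,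
    preimage_eq_empty (hxy.symm.mono_left (image_subset_range y J)), union_empty]

theorem Set.preimage_symmDiff_image_union_left {α ι κ : Type*} {x : ι → α} {y : κ → α}
    (hx : Injective x) (hxy : Disjoint (range x) (range y)) (I : Set ι) (J₁ J₂ : Set κ) :
    x ⁻¹' symmDiff (x '' I ∪ y '' J₁) (x '' I ∪ y '' J₂) = ∅ := by
  rw [preimage_symmDiff, preimage_image_union_image_of_injective hx hxy,
    preimage_image_union_image_of_injective hx hxy, symmDiff_self, bot_eq_empty]

theorem Set.preimage_symmDiff_image_union_right {α ι κ : Type*} {x : ι → α} {y : κ → α}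
    (hy : Injective y) (hxy : Disjoint (range x) (range y)) (I : Set ι) (J₁ J₂ : Set κ) :
    y ⁻¹' symmDiff (x '' I ∪ y '' J₁) (x '' I ∪ y '' J₂) = symmDiff J₁ J₂ := by
  rw [preimage_symmDiff, union_comm, preimage_image_union_image_of_injective hy hxy.symm,
    union_comm, preimage_image_union_image_of_injective hy hxy.symm]

theorem map_indicator_image_union_empiricalMeasure_eq {α β ι κ : Type*} [MeasurableSpace α]
    [MeasurableSingletonClass α] [MeasurableSpace β] [Zero β] [Fintype ι] [Fintype κ]
    {x : ι → α} {y : κ → α} (hx : Injective x) (hy : Injective y)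
    (hxy : Disjoint (range x) (range y)) {r : ℕ} {I : Finset ι} {J : Finset κ}
    (hI : I.Nonempty) (hJ : J.Nonempty) (hIcard : Fintype.card ι = r * #I)
    (hJcard : Fintype.card κ = r * #J) (b : β) :
    (empiricalMeasure x).map ((x '' I ∪ y '' J).indicator fun _ => b)
      = (empiricalMeasure y).map ((x '' I ∪ y '' J).indicator fun _ => b) := by
  have hmeas : Measurable ((x '' I ∪ y '' J).indicator fun _ => b) :=
    measurable_const.indicator
      ((I.finite_toSet.image x).union (J.finite_toSet.image y)).measurableSet
  have hxI : (x '' I ∪ y '' J).indicator (fun _ => b) ∘ x = (I : Set ι).indicator fun _ => b := by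
    ext i
    rw [comp_apply, ← Set.indicator_comp_right,
      Set.preimage_image_union_image_of_injective hx hxy]
    rfl
  have hyJ : (x '' I ∪ y '' J).indicator (fun _ => b) ∘ y = (J : Set κ).indicator fun _ => b := by
    ext j
    rw [comp_apply, ← Set.indicator_comp_right, union_comm,
      Set.preimage_image_union_image_of_injective hy hxy.symm]
    rfl
  rw [map_empiricalMeasure hmeas, map_empiricalMeasure hmeas, hxI, hyJ,
    empiricalMeasure_indicator hI hIcard, empiricalMeasure_indicator hJ hJcard]

theorem Finset.exists_card_eq_mem_notMem {ι : Type*} [Fintype ι] [DecidableEq ι] (a : ι) {k : ℕ}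
    (hk0 : 0 < k) (hk : k < Fintype.card ι) :
    ∃ s t : Finset ι, #s = k ∧ #t = k ∧ a ∈ s ∧ a ∉ t := by
  obtain ⟨s, has, -, hs⟩ := exists_subsuperset_card_eq (subset_univ {a})
    (by rwa [card_singleton]) hk.le
  obtain ⟨t, hta, ht⟩ := exists_subset_card_eq (s := univ.erase a) (n := k)
    (by rw [card_erase_of_mem (mem_univ a), card_univ]; omega)
  exact ⟨s, t, hs, ht, singleton_subset_iff.1 has, fun h => by simpa using hta h⟩

theorem preimage_midpoint_indicator_eq_symmDiff {α E : Type*} [AddCommGroup E] [Module ℝ E]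
    {b : E} (hb : b ≠ 0) (A B : Set α) :
    (fun z => (1 - 1 / 2 : ℝ) • A.indicator (fun _ => b) z
        + (1 / 2 : ℝ) • B.indicator (fun _ => b) z) ⁻¹' {(1 / 2 : ℝ) • b} = symmDiff A B := by
  ext z
  by_cases hA : z ∈ A <;> by_cases hB : z ∈ B <;>
    norm_num [hA, hB, Set.mem_symmDiff, hb, eq_comm (a := (0 : E))]

theorem equalizing_maps_not_coprime_not_convex
    (d p n m : ℕ) (hp : 1 ≤ p) (hn : 1 ≤ n) (hm : 1 ≤ m)
    (hcop : ¬ Nat.Coprime n m)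
    (x : Fin n → EuclideanSpace ℝ (Fin d)) (hx : Function.Injective x)
    (y : Fin m → EuclideanSpace ℝ (Fin d)) (hy : Function.Injective y)
    (hdisj : Disjoint (Set.range x) (Set.range y))
    (P Q : Measure (EuclideanSpace ℝ (Fin d)))
    (hP : P = (n : ℝ≥0∞)⁻¹ • ∑ i, Measure.dirac (x i))
    (hQ : Q = (m : ℝ≥0∞)⁻¹ • ∑ j, Measure.dirac (y j))
    (E : Set (EuclideanSpace ℝ (Fin d) → EuclideanSpace ℝ (Fin p)))
    (hE : E = {f | Measurable f ∧ P.map f = Q.map f}) :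
    ¬ (∀ f ∈ E, ∀ g ∈ E, ∀ t : ℝ, t ∈ Set.Ioo (0:ℝ) 1 →
        (fun x => (1 - t) • f x + t • g x) ∈ E) := by
  intro hconvex
  obtain ⟨q, hq, ⟨n', rfl⟩, ⟨m', rfl⟩⟩ := Nat.Prime.not_coprime_iff_dvd.1 hcop
  have hn' : 0 < n' := Nat.pos_of_mul_pos_left hn
  have hm' : 0 < m' := Nat.pos_of_mul_pos_left hm
  obtain ⟨I, -, hI⟩ := exists_subset_card_eq (s := (univ : Finset (Fin (q * n')))) (n := n')
    (by simpa using Nat.le_mul_of_pos_left n' hq.pos)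
  obtain ⟨J₁, J₂, hJ₁, hJ₂, hj₁, hj₂⟩ := exists_card_eq_mem_notMem (⟨0, hm⟩ : Fin (q * m')) hm'
    (by simpa using lt_mul_left hm' hq.one_lt)
  obtain ⟨b, hb⟩ : ∃ b : EuclideanSpace ℝ (Fin p), b ≠ 0 :=
    have : Nonempty (Fin p) := ⟨⟨0, hp⟩⟩
    exists_ne 0
  rw [← empiricalMeasure_fin] at hP hQ
  subst hP hQ hE
  have hmem : ∀ J : Finset (Fin (q * m')), #J = m' →
      (x '' I ∪ y '' J).indicator (fun _ => b) ∈
        {f | Measurable f ∧ (empiricalMeasure x).map f = (empiricalMeasure y).map f} :=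
    fun J hJ => ⟨measurable_const.indicator
        ((I.finite_toSet.image x).union (J.finite_toSet.image y)).measurableSet,
      map_indicator_image_union_empiricalMeasure_eq hx hy hdisj (card_pos.1 (by omega))
        (card_pos.1 (by omega)) (by rw [Fintype.card_fin, hI]) (by rw [Fintype.card_fin, hJ]) b⟩
  obtain ⟨hmeas, hmap⟩ :=
    hconvex _ (hmem J₁ hJ₁) _ (hmem J₂ hJ₂) (1 / 2) ⟨by norm_num, by norm_num⟩
  have hval := congrArg (· {(1 / 2 : ℝ) • b}) hmap
  rw [Measure.map_apply hmeas (measurableSet_singleton _),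
    Measure.map_apply hmeas (measurableSet_singleton _),
    preimage_midpoint_indicator_eq_symmDiff hb] at hval
  have hx0 := (empiricalMeasure_apply_eq_zero_iff x _).2
    (preimage_symmDiff_image_union_left hx hdisj I J₁ J₂)
  refine (empiricalMeasure_apply_eq_zero_iff y _).not.2 ?_ (hval ▸ hx0)
  rw [preimage_symmDiff_image_union_right hy hdisj]
  exact Set.nonempty_iff_ne_empty.1 ⟨⟨0, hm⟩, Or.inl ⟨hj₁, hj₂⟩⟩
end

section
/- Let d ≥ 2 and let F_Lin be the class of affine maps x ↦ θx + θ₀ from ℝ^d to ℝ^p. There exist Borel probability measures P, Q on ℝ^d such that E(P,Q) ∩ F_Lin is not convex. -/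
open MeasureTheory

/-- The class of affine (weight-linear) maps `x ↦ θ x + θ₀`. -/
def FLin (d p : ℕ) : Set (EuclideanSpace ℝ (Fin d) → EuclideanSpace ℝ (Fin p)) :=
  {f | ∃ (θ : EuclideanSpace ℝ (Fin d) →ₗ[ℝ] EuclideanSpace ℝ (Fin p))
         (θ₀ : EuclideanSpace ℝ (Fin p)), f = fun x => θ x + θ₀}

/-- The set of equalizing maps between `P` and `Q`. -/
def EqMaps (d p : ℕ) (P Q : Measure (EuclideanSpace ℝ (Fin d))) :
    Set (EuclideanSpace ℝ (Fin d) → EuclideanSpace ℝ (Fin p)) :=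
  {f | Measurable f ∧ P.map f = Q.map f}

/-!
Let `A, B` be independent fair coins on `{0, 1}`, placed in two coordinates `x i₀, x i₁`:
`P = Law(A, B)` and `Q = Law(A, A)`. The maps `x ↦ x i₀ • e` and `x ↦ x i₁ • (-e)` each read a
single coordinate, whose law is that of `A` under both `P` and `Q`, so both equalize `P` and `Q`.
Their midpoint `x ↦ ((x i₀ - x i₁) / 2) • e` vanishes `Q`-almost surely, but not `P`-almost surely,
since `A ≠ B` with positive probability.
-/

open ProbabilityTheory

section Laws

variable {α E W : Type*} [MeasurableSpace α] [MeasurableSpace E] [MeasurableSpace W]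

noncomputable def indepLaw (ρ : Measure α) (v : α × α → E) : Measure E := (ρ.prod ρ).map v

noncomputable def diagLaw (ρ : Measure α) (v : α × α → E) : Measure E := ρ.map fun a => v (a, a)

lemma map_indepLaw_eq_map_diagLaw_of_eq_fst {ρ : Measure α} [IsProbabilityMeasure ρ]
    {v : α × α → E} {F : E → W} (hv : Measurable v) (hF : Measurable F)
    (hFv : ∀ z, F (v z) = F (v (z.1, z.1))) :
    (indepLaw ρ v).map F = (diagLaw ρ v).map F := by
  have hdiag : Measurable fun a : α => v (a, a) := by fun_prop
  have hfac : F ∘ v = (F ∘ fun a => v (a, a)) ∘ Prod.fst := funext hFv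
  rw [indepLaw, diagLaw, Measure.map_map hF hv, Measure.map_map hF hdiag, hfac,
    ← Measure.map_map (hF.comp hdiag) measurable_fst, ← Measure.fst, Measure.fst_prod]

lemma map_indepLaw_eq_map_diagLaw_of_eq_snd {ρ : Measure α} [IsProbabilityMeasure ρ]
    {v : α × α → E} {F : E → W} (hv : Measurable v) (hF : Measurable F)
    (hFv : ∀ z, F (v z) = F (v (z.2, z.2))) :
    (indepLaw ρ v).map F = (diagLaw ρ v).map F := by
  have hdiag : Measurable fun a : α => v (a, a) := by fun_prop
  have hfac : F ∘ v = (F ∘ fun a => v (a, a)) ∘ Prod.snd := funext hFv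
  rw [indepLaw, diagLaw, Measure.map_map hF hv, Measure.map_map hF hdiag, hfac,
    ← Measure.map_map (hF.comp hdiag) measurable_snd, ← Measure.snd, Measure.snd_prod]

lemma prod_compl_diagonal_ne_zero {ρ : Measure α} [SFinite ρ] {a b : α} (hab : a ≠ b)
    (ha : ρ {a} ≠ 0) (hb : ρ {b} ≠ 0) : ρ.prod ρ (Set.diagonal α)ᶜ ≠ 0 := by
  have hsub : {a} ×ˢ {b} ⊆ (Set.diagonal α)ᶜ := by simpa using hab
  intro h
  have hab0 := measure_mono_null hsub h
  rw [Measure.prod_prod] at hab0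
  exact mul_ne_zero ha hb hab0

lemma map_indepLaw_ne_map_diagLaw [Zero W] [MeasurableSingletonClass W] {ρ : Measure α}
    {v : α × α → E} {F : E → W} (hv : Measurable v) (hF : Measurable F)
    (hFv : ∀ z, F (v z) = 0 ↔ z.1 = z.2) (hρ : ρ.prod ρ (Set.diagonal α)ᶜ ≠ 0) :
    (indepLaw ρ v).map F ≠ (diagLaw ρ v).map F := by
  have hdiag : Measurable fun a : α => v (a, a) := by fun_prop
  have hmeas : MeasurableSet ({0}ᶜ : Set W) := (measurableSet_singleton 0).compl
  have hpre : F ∘ v ⁻¹' {0}ᶜ = (Set.diagonal α)ᶜ := by ext z; simp [hFv]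
  have hpre' : (F ∘ fun a => v (a, a)) ⁻¹' {0}ᶜ = ∅ := by ext a; simp [hFv]
  intro h
  have := congrArg (· {0}ᶜ) h
  simp only [indepLaw, diagLaw, Measure.map_map hF hv, Measure.map_map hF hdiag,
    Measure.map_apply (hF.comp hv) hmeas, Measure.map_apply (hF.comp hdiag) hmeas, hpre, hpre',
    measure_empty] at this
  exact hρ this

lemma uniformOn_prod_compl_diagonal_ne_zero [MeasurableSingletonClass α] {s : Set α}
    (hs : s.Finite) {a b : α} (ha : a ∈ s) (hb : b ∈ s) (hab : a ≠ b) :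
    (uniformOn s).prod (uniformOn s) (Set.diagonal α)ᶜ ≠ 0 := by
  have hatom : ∀ c ∈ s, uniformOn s {c} ≠ 0 := fun c hc => by
    simpa [uniformOn_eq_zero_iff hs] using hc
  exact prod_compl_diagonal_ne_zero hab (hatom a ha) (hatom b hb)

end Laws

lemma measurable_of_mem_FLin {d p : ℕ} {f : EuclideanSpace ℝ (Fin d) → EuclideanSpace ℝ (Fin p)}
    (hf : f ∈ FLin d p) : Measurable f := by
  obtain ⟨θ, θ₀, rfl⟩ := hf
  exact (θ.continuous_of_finiteDimensional.add continuous_const).measurable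

lemma mem_EqMaps_inter_FLin {d p : ℕ} {P Q : Measure (EuclideanSpace ℝ (Fin d))}
    {f : EuclideanSpace ℝ (Fin d) → EuclideanSpace ℝ (Fin p)} (hf : f ∈ FLin d p)
    (hPQ : P.map f = Q.map f) : f ∈ EqMaps d p P Q ∩ FLin d p :=
  ⟨⟨measurable_of_mem_FLin hf, hPQ⟩, hf⟩

lemma coord_smul_mem_FLin {d p : ℕ} (i : Fin d) (e : EuclideanSpace ℝ (Fin p)) :
    (fun x : EuclideanSpace ℝ (Fin d) => x i • e) ∈ FLin d p :=
  ⟨(EuclideanSpace.proj i : EuclideanSpace ℝ (Fin d) →L[ℝ] ℝ).toLinearMap.smulRight e, 0, by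
    ext x; simp⟩

theorem linear_equalizing_maps_not_universally_convex
    (d p : ℕ) (hd : 2 ≤ d) (hp : 1 ≤ p) :
    ∃ (P Q : Measure (EuclideanSpace ℝ (Fin d))),
      IsProbabilityMeasure P ∧ IsProbabilityMeasure Q ∧
      ¬ (∀ f ∈ EqMaps d p P Q ∩ FLin d p, ∀ g ∈ EqMaps d p P Q ∩ FLin d p,
          ∀ t : ℝ, t ∈ Set.Ioo (0:ℝ) 1 →
            (fun x => (1 - t) • f x + t • g x) ∈ EqMaps d p P Q ∩ FLin d p) := by
  obtain ⟨i₀, i₁, hi⟩ : ∃ i₀ i₁ : Fin d, i₀ ≠ i₁ := ⟨⟨0, by omega⟩, ⟨1, hd⟩, by simp [Fin.ext_iff]⟩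
  set e : EuclideanSpace ℝ (Fin p) := EuclideanSpace.single ⟨0, hp⟩ 1
  have he : e ≠ 0 := by simp [e]
  set v : ℝ × ℝ → EuclideanSpace ℝ (Fin d) := fun z =>
    z.1 • EuclideanSpace.single i₀ 1 + z.2 • EuclideanSpace.single i₁ 1
  have hv : Measurable v := by fun_prop
  have hv₀ : ∀ z, v z i₀ = z.1 := by simp [v, hi.symm]
  have hv₁ : ∀ z, v z i₁ = z.2 := by simp [v, hi]
  set ρ : Measure ℝ := uniformOn {0, 1}
  have : IsProbabilityMeasure ρ :=
    isProbabilityMeasure_uniformOn' (Set.toFinite _) (by simp) (by measurability)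
  refine ⟨indepLaw ρ v, diagLaw ρ v, Measure.isProbabilityMeasure_map hv.aemeasurable,
    Measure.isProbabilityMeasure_map (by fun_prop), fun hconvex => ?_⟩
  have hf := coord_smul_mem_FLin i₀ e
  have hg := coord_smul_mem_FLin i₁ (-e)
  have hmid := hconvex
    _ (mem_EqMaps_inter_FLin hf <| map_indepLaw_eq_map_diagLaw_of_eq_fst hv
      (measurable_of_mem_FLin hf) (by simp [hv₀]))
    _ (mem_EqMaps_inter_FLin hg <| map_indepLaw_eq_map_diagLaw_of_eq_snd hv
      (measurable_of_mem_FLin hg) (by simp [hv₁]))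
    (1 / 2) ⟨by norm_num, by norm_num⟩
  refine map_indepLaw_ne_map_diagLaw hv hmid.1.1 (fun z => ?_)
    (uniformOn_prod_compl_diagonal_ne_zero (Set.toFinite _) (by simp) (by simp) zero_ne_one)
    hmid.1.2
  rw [hv₀, hv₁, show (1 - 1 / 2 : ℝ) • z.1 • e + (1 / 2 : ℝ) • z.2 • -e = ((z.1 - z.2) / 2) • e by
    module]
  simp [he, sub_eq_zero]
end
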